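/- With C(x) := ∏_{k=0}^∞ cos²(2x/(2k+1)), the integral I_δ := ∫_0^∞ sin(δπx) C(x) dx/x converges absolutely for every δ > 0, and I_δ → 0 as δ → 0+; more precisely, I_δ ≤ δ^{1/2} π + δ^{1/2} c₁π/(3 log 2) for the constant c₁ with C(x) ≤ c₁ 2^{−3x/π} on [1, ∞). -/

import Mathlib

open Real MeasureTheory Filter

/-- The infinite product `C(x) = ∏_{k=0}^∞ cos²(2x/(2k+1))`. -/
noncomputable def Cfun (x : ℝ) : ℝ := ∏' k : ℕ, Real.cos (2 * x / (2 * (k : ℝ) + 1)) ^ 2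

open Set


lemma fk_nonneg (x : ℝ) (k : ℕ) : 0 ≤ Real.cos (2 * x / (2 * (k : ℝ) + 1)) ^ 2 := sq_nonneg _
lemma fk_le_one (x : ℝ) (k : ℕ) : Real.cos (2 * x / (2 * (k : ℝ) + 1)) ^ 2 ≤ 1 := by
  exact Real.cos_sq_le_one _

lemma Cfun_hasProd (x : ℝ) :
    HasProd (fun k : ℕ => Real.cos (2 * x / (2 * (k : ℝ) + 1)) ^ 2) (Cfun x) := by
  set g : ℕ → ℝ := fun k => Real.cos (2 * x / (2 * (k : ℝ) + 1)) ^ 2 with hg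
  have hanti : Antitone (fun s : Finset ℕ => ∏ i ∈ s, g i) := by
    intro s t hst
    have := Finset.prod_sdiff hst (f := g)
    calc ∏ i ∈ t, g i = (∏ i ∈ t \ s, g i) * ∏ i ∈ s, g i := this.symm
      _ ≤ 1 * ∏ i ∈ s, g i := by
          apply mul_le_mul_of_nonneg_right _ (Finset.prod_nonneg fun i _ => fk_nonneg x i)
          exact Finset.prod_le_one (fun i _ => fk_nonneg x i) (fun i _ => fk_le_one x i)
      _ = ∏ i ∈ s, g i := one_mul _
  have hbdd : BddBelow (Set.range fun s : Finset ℕ => ∏ i ∈ s, g i) := by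
    refine ⟨0, ?_⟩
    rintro y ⟨s, rfl⟩
    exact Finset.prod_nonneg fun i _ => fk_nonneg x i
  have hm : Multipliable g := ⟨_, tendsto_atTop_ciInf hanti hbdd⟩
  exact hm.hasProd

lemma Cfun_nonneg (x : ℝ) : 0 ≤ Cfun x :=
  ge_of_tendsto' (Cfun_hasProd x) fun s => Finset.prod_nonneg fun i _ => fk_nonneg x i

lemma Cfun_le_one (x : ℝ) : Cfun x ≤ 1 :=
  le_of_tendsto' (Cfun_hasProd x)
    fun s => Finset.prod_le_one (fun i _ => fk_nonneg x i) (fun i _ => fk_le_one x i)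

lemma measurable_Cfun : Measurable Cfun := by
  apply measurable_of_tendsto_metrizable
    (f := fun n x => ∏ k ∈ Finset.range n, Real.cos (2 * x / (2 * (k : ℝ) + 1)) ^ 2)
  · intro n
    apply Continuous.measurable
    apply continuous_finset_prod
    intro k _
    fun_prop
  · rw [tendsto_pi_nhds]
    exact fun x => (Cfun_hasProd x).tendsto_prod_nat


section
variable {c₁ δ : ℝ}

lemma bpos : 0 < 3 * Real.log 2 / π := by positivity

lemma measF (δ : ℝ) : Measurable (fun x : ℝ => Real.sin (δ * π * x) * Cfun x / x) := by
  apply Measurable.div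
  · exact (Real.measurable_sin.comp (measurable_const.mul measurable_id)).mul measurable_Cfun
  · exact measurable_id

lemma absF_eq (δ : ℝ) {x : ℝ} (hx : 0 < x) :
    |Real.sin (δ * π * x) * Cfun x / x| = |Real.sin (δ * π * x)| * Cfun x / x := by
  rw [abs_div, abs_mul, abs_of_nonneg (Cfun_nonneg x), abs_of_pos hx]

lemma bound1 (hδ : 0 < δ) {x : ℝ} (hx : 0 < x) :
    |Real.sin (δ * π * x) * Cfun x / x| ≤ δ * π := by
  rw [absF_eq δ hx]
  have h1 : |Real.sin (δ * π * x)| ≤ δ * π * x :=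
    (Real.abs_sin_le_abs (x := δ * π * x)).trans_eq (abs_of_pos (by positivity))
  calc |Real.sin (δ * π * x)| * Cfun x / x ≤ (δ * π * x) * 1 / x := by
        gcongr
        all_goals first | exact h1 | exact Cfun_le_one x | exact Cfun_nonneg x | positivity
    _ = δ * π := by field_simp

lemma bound2 (hc₁ : 0 < c₁)
    (hbound : ∀ x : ℝ, 1 ≤ x → Cfun x ≤ c₁ * (2 : ℝ) ^ (-(3 * x) / π)) {x : ℝ} (hx : 1 ≤ x) :
    |Real.sin (δ * π * x) * Cfun x / x| ≤ c₁ * Real.exp (-(3 * Real.log 2 / π) * x) := by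
  have hx0 : (0:ℝ) < x := lt_of_lt_of_le one_pos hx
  rw [absF_eq δ hx0]
  calc |Real.sin (δ * π * x)| * Cfun x / x ≤ 1 * Cfun x / 1 := by
        gcongr
        all_goals first | exact Real.abs_sin_le_one _ | exact Cfun_le_one x | exact Cfun_nonneg x | exact hx | exact (mul_nonneg zero_le_one (Cfun_nonneg x)) | positivity
    _ = Cfun x := by ring
    _ ≤ c₁ * (2 : ℝ) ^ (-(3 * x) / π) := hbound x hx
    _ = c₁ * Real.exp (-(3 * Real.log 2 / π) * x) := by
        rw [Real.rpow_def_of_pos two_pos]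
        congr 1
        field_simp

lemma bound3 {x : ℝ} (hx : 0 < x) :
    |Real.sin (δ * π * x) * Cfun x / x| ≤ x⁻¹ := by
  rw [absF_eq δ hx]
  calc |Real.sin (δ * π * x)| * Cfun x / x ≤ 1 * 1 / x := by
        gcongr
        all_goals first | exact Real.abs_sin_le_one _ | exact Cfun_le_one x | exact Cfun_nonneg x | positivity
    _ = x⁻¹ := by ring

lemma intOn_head (hδ : 0 < δ) (T : ℝ) :
    IntegrableOn (fun x : ℝ => |Real.sin (δ * π * x) * Cfun x / x|) (Ioc 0 T) := by
  apply Integrable.mono' (integrable_const (δ * π)) ((measF δ).abs.aestronglyMeasurable)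
  refine (ae_restrict_iff' measurableSet_Ioc).2 (ae_of_all _ fun x hx => ?_)
  rw [Real.norm_eq_abs, abs_abs]
  exact bound1 hδ hx.1

lemma intOn_tail (hc₁ : 0 < c₁)
    (hbound : ∀ x : ℝ, 1 ≤ x → Cfun x ≤ c₁ * (2 : ℝ) ^ (-(3 * x) / π)) {T : ℝ} (hT : 1 ≤ T) :
    IntegrableOn (fun x : ℝ => |Real.sin (δ * π * x) * Cfun x / x|) (Ioi T) := by
  have hint : IntegrableOn (fun x : ℝ => c₁ * Real.exp (-(3 * Real.log 2 / π) * x)) (Ioi T) :=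
    (exp_neg_integrableOn_Ioi T bpos).const_mul c₁
  apply Integrable.mono' hint ((measF δ).abs.aestronglyMeasurable)
  refine (ae_restrict_iff' measurableSet_Ioi).2 (ae_of_all _ fun x hx => ?_)
  rw [Real.norm_eq_abs, abs_abs]
  exact bound2 hc₁ hbound (hT.trans hx.le)

lemma tail_integral {T : ℝ} :
    ∫ x in Ioi T, c₁ * Real.exp (-(3 * Real.log 2 / π) * x)
      = c₁ * ((3 * Real.log 2 / π)⁻¹ * Real.exp (-(3 * Real.log 2 / π * T))) := by
  rw [MeasureTheory.integral_const_mul]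
  congr 1
  have := integral_comp_mul_left_Ioi (fun y => Real.exp (-y)) T bpos
  simp only [smul_eq_mul, neg_mul] at this ⊢
  rw [this, integral_exp_neg_Ioi]

end
section
variable {c₁ δ : ℝ}

lemma tail_le (hc₁ : 0 < c₁)
    (hbound : ∀ x : ℝ, 1 ≤ x → Cfun x ≤ c₁ * (2 : ℝ) ^ (-(3 * x) / π)) {T : ℝ} (hT : 1 ≤ T) :
    ∫ x in Ioi T, |Real.sin (δ * π * x) * Cfun x / x|
      ≤ c₁ * π / (3 * Real.log 2) * Real.exp (-(3 * Real.log 2 / π * T)) := by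
  have h := setIntegral_mono_on (μ := volume) (intOn_tail (δ := δ) hc₁ hbound hT)
    ((exp_neg_integrableOn_Ioi T bpos).const_mul c₁) measurableSet_Ioi
    (fun x hx => bound2 (δ := δ) hc₁ hbound (hT.trans (le_of_lt hx)))
  rw [tail_integral] at h
  calc ∫ x in Ioi T, |Real.sin (δ * π * x) * Cfun x / x|
      ≤ c₁ * ((3 * Real.log 2 / π)⁻¹ * Real.exp (-(3 * Real.log 2 / π * T))) := h
    _ = c₁ * π / (3 * Real.log 2) * Real.exp (-(3 * Real.log 2 / π * T)) := by
        rw [inv_div]; ring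

lemma head_le (hδ : 0 < δ) {T : ℝ} (hT : 0 ≤ T) :
    ∫ x in Ioc 0 T, |Real.sin (δ * π * x) * Cfun x / x| ≤ δ * π * T := by
  have h := setIntegral_mono_on (μ := volume) (intOn_head hδ T)
    (integrable_const (δ * π)) measurableSet_Ioc
    (fun x hx => bound1 hδ hx.1)
  rw [setIntegral_const, measureReal_def, Real.volume_Ioc, smul_eq_mul] at h
  calc ∫ x in Ioc 0 T, |Real.sin (δ * π * x) * Cfun x / x|
      ≤ (ENNReal.ofReal (T - 0)).toReal * (δ * π) := h
    _ = δ * π * T := by rw [ENNReal.toReal_ofReal (by linarith)]; ring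

lemma eb_ge (T : ℝ) (hT : 1 ≤ T) : T ≤ Real.exp (3 * Real.log 2 / π * T) := by
  have hπ := Real.pi_pos
  have h2 : 3 * Real.log 2 / π * T ≤ Real.exp (3 * Real.log 2 / π * T) / Real.exp 1 := by
    have := Real.add_one_le_exp (3 * Real.log 2 / π * T - 1)
    rw [Real.exp_sub] at this; linarith
  have h3 := (le_div_iff₀ (Real.exp_pos 1)).mp h2
  have h4 : 1 ≤ 3 * Real.log 2 / π * Real.exp 1 := by
    rw [div_mul_eq_mul_div, le_div_iff₀ hπ, one_mul]
    nlinarith [Real.exp_one_gt_d9, Real.log_two_gt_d9, Real.pi_lt_d2]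
  nlinarith [mul_le_mul_of_nonneg_left h4 (by linarith : (0:ℝ) ≤ T), h3]

end
section
variable {c₁ δ : ℝ}

lemma key (hc₁ : 0 < c₁)
    (hbound : ∀ x : ℝ, 1 ≤ x → Cfun x ≤ c₁ * (2 : ℝ) ^ (-(3 * x) / π)) (hδ : 0 < δ) :
    IntegrableOn (fun x : ℝ => |Real.sin (δ * π * x) * Cfun x / x|) (Set.Ioi 0) ∧
    (∫ x in Set.Ioi (0:ℝ), |Real.sin (δ * π * x) * Cfun x / x|)
      ≤ Real.sqrt δ * π + Real.sqrt δ * c₁ * π / (3 * Real.log 2) := by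
  have hlog2 : (0:ℝ) < Real.log 2 := Real.log_pos one_lt_two
  have hA : (0:ℝ) ≤ c₁ * π / (3 * Real.log 2) := by positivity
  constructor
  · rw [← Ioc_union_Ioi_eq_Ioi (zero_le_one' ℝ)]
    exact (intOn_head hδ 1).union (intOn_tail (δ := δ) hc₁ hbound le_rfl)
  rcases le_or_gt δ 1 with hδ1 | hδ1
  · -- small δ : split at T = (√δ)⁻¹
    set T : ℝ := (Real.sqrt δ)⁻¹ with hTdef
    have hsq : 0 < Real.sqrt δ := Real.sqrt_pos.2 hδ
    have hsq1 : Real.sqrt δ ≤ 1 := Real.sqrt_le_one.2 hδ1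
    have hT0 : 0 < T := by positivity
    have hT1 : 1 ≤ T := by
      rw [hTdef, le_inv_comm₀ one_pos hsq]
      simpa using hsq1
    rw [← Ioc_union_Ioi_eq_Ioi hT0.le,
      setIntegral_union (Ioc_disjoint_Ioi le_rfl) measurableSet_Ioi
        (intOn_head hδ T) (intOn_tail (δ := δ) hc₁ hbound hT1)]
    have hhead : (∫ x in Ioc (0:ℝ) T, |Real.sin (δ * π * x) * Cfun x / x|)
        ≤ Real.sqrt δ * π := by
      refine (head_le hδ hT0.le).trans_eq ?_
      rw [hTdef]
      calc δ * π * (Real.sqrt δ)⁻¹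
          = (Real.sqrt δ * Real.sqrt δ) * π * (Real.sqrt δ)⁻¹ := by
            rw [Real.mul_self_sqrt hδ.le]
        _ = Real.sqrt δ * π * (Real.sqrt δ * (Real.sqrt δ)⁻¹) := by ring
        _ = Real.sqrt δ * π := by rw [mul_inv_cancel₀ hsq.ne', mul_one]
    have hexp : Real.exp (-(3 * Real.log 2 / π * T)) ≤ Real.sqrt δ := by
      rw [Real.exp_neg, show Real.sqrt δ = T⁻¹ by rw [hTdef, inv_inv]]
      exact inv_anti₀ hT0 (eb_ge T hT1)
    have htail : (∫ x in Ioi T, |Real.sin (δ * π * x) * Cfun x / x|)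
        ≤ c₁ * π / (3 * Real.log 2) * Real.sqrt δ :=
      (tail_le (δ := δ) hc₁ hbound hT1).trans (mul_le_mul_of_nonneg_left hexp hA)
    calc _ ≤ Real.sqrt δ * π + c₁ * π / (3 * Real.log 2) * Real.sqrt δ :=
          add_le_add hhead htail
      _ = Real.sqrt δ * π + Real.sqrt δ * c₁ * π / (3 * Real.log 2) := by ring
  · -- large δ : split at 1/δ and 1
    have hd0 : (0:ℝ) < 1/δ := by positivity
    have hd1 : 1/δ ≤ 1 := by rw [div_le_one hδ]; linarith
    have hinv : IntegrableOn (fun x : ℝ => x⁻¹) (Ioc (1/δ) 1) := by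
      refine (intervalIntegral.intervalIntegrable_inv (f := fun x : ℝ => x) (fun x hx => ?_) continuousOn_id).1
      rw [Set.uIcc_of_le hd1] at hx
      exact ne_of_gt (lt_of_lt_of_le hd0 hx.1)
    have midInt : IntegrableOn (fun x : ℝ => |Real.sin (δ * π * x) * Cfun x / x|)
        (Ioc (1/δ) 1) := by
      apply Integrable.mono' hinv ((measF δ).abs.aestronglyMeasurable)
      refine (ae_restrict_iff' measurableSet_Ioc).2 (ae_of_all _ fun x hx => ?_)
      rw [Real.norm_eq_abs, abs_abs]
      exact bound3 (lt_of_lt_of_le hd0 hx.1.le)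
    have hIoiSplit : IntegrableOn (fun x : ℝ => |Real.sin (δ * π * x) * Cfun x / x|)
        (Ioi (1/δ)) := by
      rw [← Ioc_union_Ioi_eq_Ioi hd1]
      exact midInt.union (intOn_tail (δ := δ) hc₁ hbound le_rfl)
    rw [← Ioc_union_Ioi_eq_Ioi hd0.le,
      setIntegral_union (Ioc_disjoint_Ioi le_rfl) measurableSet_Ioi
        (intOn_head hδ _) hIoiSplit,
      ← Ioc_union_Ioi_eq_Ioi hd1,
      setIntegral_union (Ioc_disjoint_Ioi le_rfl) measurableSet_Ioi
        midInt (intOn_tail (δ := δ) hc₁ hbound le_rfl)]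
    have hhead : (∫ x in Ioc (0:ℝ) (1/δ), |Real.sin (δ * π * x) * Cfun x / x|) ≤ π := by
      refine (head_le hδ hd0.le).trans_eq ?_
      field_simp
    have hmid : (∫ x in Ioc (1/δ) 1, |Real.sin (δ * π * x) * Cfun x / x|) ≤ Real.log δ := by
      have h1 := setIntegral_mono_on (μ := volume) midInt hinv measurableSet_Ioc
        (fun x hx => bound3 (δ := δ) (lt_of_lt_of_le hd0 hx.1.le))
      have h2 : (∫ x in Ioc (1/δ) 1, x⁻¹) = Real.log δ := by
        rw [← intervalIntegral.integral_of_le hd1, integral_inv, one_div_one_div]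
        rw [Set.uIcc_of_le hd1]
        exact fun h => absurd h.1 (not_le.2 hd0)
      linarith [h1, h2.ge, h2.le]
    have htail : (∫ x in Ioi (1:ℝ), |Real.sin (δ * π * x) * Cfun x / x|)
        ≤ c₁ * π / (3 * Real.log 2) := by
      refine (tail_le (δ := δ) hc₁ hbound le_rfl).trans ?_
      have : Real.exp (-(3 * Real.log 2 / π * 1)) ≤ 1 := by
        rw [Real.exp_le_one_iff]
        have := bpos
        linarith
      calc c₁ * π / (3 * Real.log 2) * Real.exp (-(3 * Real.log 2 / π * 1))
          ≤ c₁ * π / (3 * Real.log 2) * 1 := mul_le_mul_of_nonneg_left this hA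
        _ = c₁ * π / (3 * Real.log 2) := mul_one _
    have hs : 1 ≤ Real.sqrt δ := Real.one_le_sqrt.2 hδ1.le
    have hlogδ : Real.log δ ≤ 2 * (Real.sqrt δ - 1) := by
      have h1 : Real.log (Real.sqrt δ) = Real.log δ / 2 := Real.log_sqrt hδ.le
      have h2 : Real.log (Real.sqrt δ) ≤ Real.sqrt δ - 1 :=
        Real.log_le_sub_one_of_pos (Real.sqrt_pos.2 hδ)
      linarith
    have hrhs : Real.sqrt δ * π + Real.sqrt δ * c₁ * π / (3 * Real.log 2)
        = Real.sqrt δ * π + Real.sqrt δ * (c₁ * π / (3 * Real.log 2)) := by ring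
    rw [hrhs]
    have hπ3 := Real.pi_gt_three
    nlinarith [hhead, hmid, htail,
      mul_nonneg (by linarith : (0:ℝ) ≤ Real.sqrt δ - 1) hA,
      mul_nonneg (by linarith : (0:ℝ) ≤ Real.sqrt δ - 1)
        (by linarith : (0:ℝ) ≤ π - 2)]

end
theorem stmt15 (c₁ : ℝ) (hc₁ : 0 < c₁)
    (hbound : ∀ x : ℝ, 1 ≤ x → Cfun x ≤ c₁ * (2 : ℝ) ^ (-(3 * x) / π)) :
    (∀ δ : ℝ, 0 < δ →
      IntegrableOn (fun x : ℝ => |Real.sin (δ * π * x) * Cfun x / x|) (Set.Ioi 0) ∧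
      (∫ x in Set.Ioi (0:ℝ), Real.sin (δ * π * x) * Cfun x / x)
        ≤ Real.sqrt δ * π + Real.sqrt δ * c₁ * π / (3 * Real.log 2)) ∧
    Tendsto (fun δ : ℝ => ∫ x in Set.Ioi (0:ℝ), Real.sin (δ * π * x) * Cfun x / x)
      (nhdsWithin 0 (Set.Ioi 0)) (nhds 0) := by
  have main : ∀ δ : ℝ, 0 < δ →
      |∫ x in Set.Ioi (0:ℝ), Real.sin (δ * π * x) * Cfun x / x|
        ≤ Real.sqrt δ * π + Real.sqrt δ * c₁ * π / (3 * Real.log 2) := by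
    intro δ hδ
    obtain ⟨hint, hbd⟩ := key hc₁ hbound hδ
    have h := MeasureTheory.norm_integral_le_integral_norm
      (μ := volume.restrict (Set.Ioi 0)) (fun x => Real.sin (δ * π * x) * Cfun x / x)
    simp only [Real.norm_eq_abs] at h
    exact (h.trans hbd)
  refine ⟨fun δ hδ => ⟨(key hc₁ hbound hδ).1, le_trans (le_abs_self _) (main δ hδ)⟩, ?_⟩
  apply squeeze_zero_norm' (a := fun δ => Real.sqrt δ * (π + c₁ * π / (3 * Real.log 2)))
  · filter_upwards [eventually_mem_nhdsWithin] with δ (hδ : δ ∈ Set.Ioi (0:ℝ))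
    rw [Real.norm_eq_abs]
    calc |∫ x in Set.Ioi (0:ℝ), Real.sin (δ * π * x) * Cfun x / x|
        ≤ Real.sqrt δ * π + Real.sqrt δ * c₁ * π / (3 * Real.log 2) := main δ hδ
      _ = Real.sqrt δ * (π + c₁ * π / (3 * Real.log 2)) := by ring
  · have h1 : Tendsto Real.sqrt (nhdsWithin 0 (Set.Ioi 0)) (nhds 0) :=
      (Real.continuous_sqrt.tendsto' 0 0 Real.sqrt_zero).mono_left nhdsWithin_le_nhds
    have := h1.mul_const (π + c₁ * π / (3 * Real.log 2))
    rwa [zero_mul] at this
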